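/- arXiv:1309.4546 — 4 statements merged into one kernel-verified Lean document; each statement's English description precedes it below -/
import Mathlib

section
/- Let F ∈ L²([-σ,σ]) (extended by zero to ℝ). Then the holomorphic Fourier transform f(z) = ∫_{-σ}^{σ} F(ξ) e^{-izξ} dξ defines an entire function of exponential type σ, i.e., there is a constant M with |f(z)| ≤ M e^{σ|z|} for all z ∈ ℂ. -/
/-!
If `F` is integrable against a measure carried by `[-σ, σ]`, then for `|ξ| ≤ σ` the kernel
`e^{-izξ}` has modulus `e^{ξ Im z} ≤ e^{σ|z|}`, and on a ball around any `z₀` its `z`-derivative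
`-iξ e^{-izξ}` is bounded uniformly in `ξ`. Integrating these bounds against `|F|` gives the
exponential-type estimate and, by differentiation under the integral sign, holomorphy.
-/

open MeasureTheory Complex

section FourierLaplace

variable {μ : Measure ℝ} {F : ℝ → ℂ} {σ : ℝ}

lemma norm_cexp_neg_I_mul_ofReal_le {ξ : ℝ} (hξ : |ξ| ≤ σ) (z : ℂ) :
    ‖cexp (-I * z * ξ)‖ ≤ Real.exp (σ * ‖z‖) := by
  have hre : (-I * z * ξ).re = ξ * z.im := by
    simp only [mul_re, mul_im, neg_re, neg_im, I_re, I_im, ofReal_re, ofReal_im]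
    ring
  rw [norm_exp, hre, Real.exp_le_exp]
  calc ξ * z.im ≤ |ξ| * |z.im| := by rw [← abs_mul]; exact le_abs_self _
    _ ≤ σ * ‖z‖ := mul_le_mul hξ (abs_im_le_norm z) (abs_nonneg _) ((abs_nonneg ξ).trans hξ)

lemma hasDerivAt_cexp_neg_I_mul_ofReal (ξ : ℝ) (z : ℂ) :
    HasDerivAt (fun w : ℂ => cexp (-I * w * ξ)) (-I * ξ * cexp (-I * z * ξ)) z := by
  have hlin : HasDerivAt (fun w : ℂ => -I * w * ξ) (-I * ξ) z := by
    simpa using ((hasDerivAt_id z).const_mul (-I)).mul_const (ξ : ℂ)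
  simpa only [mul_comm] using hlin.cexp

lemma aestronglyMeasurable_mul_cexp (hF : Integrable F μ) (z : ℂ) :
    AEStronglyMeasurable (fun ξ : ℝ => F ξ * cexp (-I * z * ξ)) μ :=
  hF.1.mul (by fun_prop : Continuous fun ξ : ℝ => cexp (-I * z * ξ)).aestronglyMeasurable

theorem norm_integral_mul_cexp_le (hF : Integrable F μ) (hμ : ∀ᵐ ξ ∂μ, |ξ| ≤ σ) (z : ℂ) :
    ‖∫ ξ, F ξ * cexp (-I * z * ξ) ∂μ‖ ≤ (∫ ξ, ‖F ξ‖ ∂μ) * Real.exp (σ * ‖z‖) := by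
  rw [← integral_mul_const]
  refine norm_integral_le_of_norm_le (hF.norm.mul_const _) ?_
  filter_upwards [hμ] with ξ hξ
  rw [norm_mul]
  exact mul_le_mul_of_nonneg_left (norm_cexp_neg_I_mul_ofReal_le hξ z) (norm_nonneg _)

theorem differentiable_integral_mul_cexp (hF : Integrable F μ) (hμ : ∀ᵐ ξ ∂μ, |ξ| ≤ σ) :
    Differentiable ℂ fun z : ℂ => ∫ ξ, F ξ * cexp (-I * z * ξ) ∂μ := by
  intro z₀
  have hball : ∀ z ∈ Metric.ball z₀ 1, ‖z‖ ≤ ‖z₀‖ + 1 := fun z hz =>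
    (norm_le_norm_add_norm_sub' z z₀).trans (by gcongr; exact (mem_ball_iff_norm.1 hz).le)
  have hbound : ∀ᵐ ξ ∂μ, ∀ z ∈ Metric.ball z₀ 1,
      ‖F ξ * (-I * ξ * cexp (-I * z * ξ))‖ ≤ ‖F ξ‖ * (σ * Real.exp (σ * (‖z₀‖ + 1))) := by
    filter_upwards [hμ] with ξ hξ z hz
    have hσ : 0 ≤ σ := (abs_nonneg ξ).trans hξ
    have hexp : ‖cexp (-I * z * ξ)‖ ≤ Real.exp (σ * (‖z₀‖ + 1)) :=
      (norm_cexp_neg_I_mul_ofReal_le hξ z).trans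
        (Real.exp_le_exp.2 (mul_le_mul_of_nonneg_left (hball z hz) hσ))
    rw [norm_mul, norm_mul, norm_mul, norm_neg, norm_I, one_mul, norm_real, Real.norm_eq_abs]
    exact mul_le_mul_of_nonneg_left (mul_le_mul hξ hexp (norm_nonneg _) hσ) (norm_nonneg _)
  have hderiv := hasDerivAt_integral_of_dominated_loc_of_deriv_le
    (F' := fun z ξ => F ξ * (-I * ξ * cexp (-I * z * ξ)))
    (Metric.ball_mem_nhds z₀ one_pos)
    (.of_forall (aestronglyMeasurable_mul_cexp hF))
    ((hF.norm.mul_const (Real.exp (σ * ‖z₀‖))).mono' (aestronglyMeasurable_mul_cexp hF z₀)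
      (by filter_upwards [hμ] with ξ hξ
          rw [norm_mul]
          exact mul_le_mul_of_nonneg_left (norm_cexp_neg_I_mul_ofReal_le hξ z₀) (norm_nonneg _)))
    (hF.1.mul (by fun_prop : Continuous fun ξ : ℝ => -I * ξ * cexp (-I * z₀ * ξ)).aestronglyMeasurable)
    hbound (hF.norm.mul_const _)
    (.of_forall fun ξ z _ => (hasDerivAt_cexp_neg_I_mul_ofReal ξ z).const_mul (F ξ))
  exact hderiv.2.differentiableAt

end FourierLaplace

theorem stmt_1_general (σ : ℝ) (F : ℝ → ℂ)
    (hF : MeasureTheory.MemLp F 2 (MeasureTheory.volume : Measure ℝ))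
    (f : ℂ → ℂ)
    (hf : ∀ z : ℂ, f z = ∫ ξ in Set.Icc (-σ) σ, F ξ * Complex.exp (-Complex.I * z * ξ)) :
    Differentiable ℂ f ∧
      ∃ M : ℝ, ∀ z : ℂ, ‖f z‖ ≤ M * Real.exp (σ * ‖z‖) := by
  have hint : IntegrableOn F (Set.Icc (-σ) σ) :=
    (hF.locallyIntegrable one_le_two).integrableOn_isCompact isCompact_Icc
  have hcarried : ∀ᵐ ξ ∂volume.restrict (Set.Icc (-σ) σ), |ξ| ≤ σ :=
    (ae_restrict_mem measurableSet_Icc).mono fun _ hξ => abs_le.2 hξ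
  obtain rfl : f = fun z => ∫ ξ in Set.Icc (-σ) σ, F ξ * cexp (-I * z * ξ) := funext hf
  exact ⟨differentiable_integral_mul_cexp hint hcarried, _,
    norm_integral_mul_cexp_le hint hcarried⟩

theorem stmt_1 (σ : ℝ) (hσ : 0 < σ) (F : ℝ → ℂ)
    (hF : MeasureTheory.MemLp F 2 (MeasureTheory.volume : Measure ℝ))
    (hsupp : ∀ ξ : ℝ, ξ ∉ Set.Icc (-σ) σ → F ξ = 0)
    (f : ℂ → ℂ)
    (hf : ∀ z : ℂ, f z = ∫ ξ in Set.Icc (-σ) σ, F ξ * Complex.exp (-Complex.I * z * ξ)) :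
    Differentiable ℂ f ∧
      ∃ M : ℝ, ∀ z : ℂ, ‖f z‖ ≤ M * Real.exp (σ * ‖z‖) :=
  stmt_1_general σ F hF f hf
end

section
/- For all x ∈ ℝ, the sum 2 Σ_{m∈ℤ} |(a x - π m)^{-2} (cos((a x - π m)/2) - cos(a x - π m))| is bounded above by (4/π²)(π²/6 - 1) + 2/3 + 2(2·(3/8) + 2/π²), which is less than 2.84. -/
/-!
Reduce `a x` modulo `π` to `r ∈ [0, π)`. The two terms `m = 0, 1` are bounded by `3/8`, via
`cos (u/2) - cos u = 2 sin (3u/4) sin (u/4)` and `|sin t| ≤ |t|`. Every other term satisfies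
`|r - π m| ≥ π k` for a distinct `k ≥ 1` on each side, so it is at most `2 / (π k)²`, and by the Basel
sum the two tails contribute `2 · (2/π²) · (π²/6) = 2/3`. Hence the sum is at most `17/12`, and the
stated constant equals `17/6 < 2.84`.
-/

open Real

noncomputable def summand5 (u : ℝ) : ℝ :=
  if u = 0 then 3 / 8 else |(Real.cos (u / 2) - Real.cos u) / u ^ 2|

lemma summand5_nonneg (u : ℝ) : 0 ≤ summand5 u := by
  unfold summand5
  split_ifs
  exacts [by norm_num, abs_nonneg _]

lemma summand5_le_three_eighths (u : ℝ) : summand5 u ≤ 3 / 8 := by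
  unfold summand5
  split_ifs with hu
  · rfl
  have hu2 : 0 < u ^ 2 := by positivity
  have hprod : cos (u / 2) - cos u = 2 * sin (3 * u / 4) * sin (u / 4) := by
    rw [cos_sub_cos, show (u / 2 - u) / 2 = -(u / 4) by ring, sin_neg,
      show (u / 2 + u) / 2 = 3 * u / 4 by ring]
    ring
  have hnum : |cos (u / 2) - cos u| ≤ 3 / 8 * u ^ 2 :=
    calc |cos (u / 2) - cos u| = 2 * |sin (3 * u / 4)| * |sin (u / 4)| := by
          rw [hprod, abs_mul, abs_mul, abs_two]
      _ ≤ 2 * |3 * u / 4| * |u / 4| :=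
          mul_le_mul (mul_le_mul_of_nonneg_left abs_sin_le_abs two_pos.le) abs_sin_le_abs
            (abs_nonneg _) (by positivity)
      _ = 3 / 8 * u ^ 2 := by
          norm_num [abs_div, abs_mul]
          linear_combination (3 / 8 : ℝ) * sq_abs u
  rw [abs_div, abs_of_pos hu2, div_le_iff₀ hu2]
  exact hnum

lemma summand5_le_two_div_sq {u c : ℝ} (hc : 0 < c) (hcu : c ≤ |u|) :
    summand5 u ≤ 2 / c ^ 2 := by
  have hu : u ≠ 0 := abs_pos.mp (hc.trans_le hcu)
  have hnum : |cos (u / 2) - cos u| ≤ 2 :=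
    (abs_sub _ _).trans (by linarith [abs_cos_le_one (u / 2), abs_cos_le_one u])
  rw [summand5, if_neg hu, abs_div, abs_of_pos (show 0 < u ^ 2 by positivity), ← sq_abs u]
  calc |cos (u / 2) - cos u| / |u| ^ 2 ≤ 2 / |u| ^ 2 :=
        div_le_div_of_nonneg_right hnum (by positivity)
    _ ≤ 2 / c ^ 2 := div_le_div_of_nonneg_left zero_le_two (by positivity)
        (pow_le_pow_left₀ hc.le hcu 2)

lemma hasSum_two_div_pi_mul_succ_sq :
    HasSum (fun n : ℕ => 2 / (π * (n + 1)) ^ 2) (1 / 3) := by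
  have hbasel := (hasSum_nat_add_iff' 1).mpr hasSum_zeta_two
  have hπ : π ≠ 0 := pi_ne_zero
  have hsum : 2 / π ^ 2 * (π ^ 2 / 6 - ∑ i ∈ Finset.range 1, 1 / (i : ℝ) ^ 2) = 1 / 3 := by
    rw [Finset.sum_range_one, Nat.cast_zero, zero_pow two_ne_zero, div_zero, sub_zero]
    field_simp
    norm_num
  rw [← hsum]
  refine (hbasel.mul_left (2 / π ^ 2)).congr_fun fun n => ?_
  push_cast
  field_simp

lemma tsum_summand5_sub_pi_mul_le_of_mem_Ico {r : ℝ} (hr : r ∈ Set.Ico 0 π) :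
    ∑' m : ℤ, summand5 (r - π * m) ≤ 17 / 12 := by
  set f : ℤ → ℝ := fun m => summand5 (r - π * m)
  set b : ℕ → ℝ := fun n => 2 / (π * (n + 1)) ^ 2
  have hb := hasSum_two_div_pi_mul_succ_sq
  have hpos (n : ℕ) : f (n + 2) ≤ b n := by
    apply summand5_le_two_div_sq (by positivity)
    rw [abs_sub_comm, le_abs]
    left
    push_cast
    nlinarith [hr.2]
  have hneg (n : ℕ) : f (-(n + 1)) ≤ b n := by
    apply summand5_le_two_div_sq (by positivity)
    rw [le_abs]
    left
    push_cast
    nlinarith [hr.1]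
  have hpos_sum : Summable fun n : ℕ => f (n + 2) :=
    .of_nonneg_of_le (fun _ => summand5_nonneg _) hpos hb.summable
  have hneg_sum : Summable fun n : ℕ => f (-(n + 1)) :=
    .of_nonneg_of_le (fun _ => summand5_nonneg _) hneg hb.summable
  have hnat_sum : Summable fun n : ℕ => f n :=
    (summable_nat_add_iff 2).mp (by exact_mod_cast hpos_sum)
  calc ∑' m : ℤ, f m = f 0 + f 1 + ∑' n : ℕ, f (n + 2) + ∑' n : ℕ, f (-(n + 1)) := by
        rw [tsum_of_nat_of_neg_add_one hnat_sum hneg_sum, ← hnat_sum.sum_add_tsum_nat_add 2]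
        simp [Finset.sum_range_succ]
    _ ≤ 3 / 8 + 3 / 8 + 1 / 3 + 1 / 3 := by
        rw [← hb.tsum_eq]
        gcongr ?_ + ?_ + ?_ + ?_
        · exact summand5_le_three_eighths _
        · exact summand5_le_three_eighths _
        · exact hpos_sum.tsum_le_tsum hpos hb.summable
        · exact hneg_sum.tsum_le_tsum hneg hb.summable
    _ = 17 / 12 := by norm_num

lemma tsum_summand5_sub_pi_mul_le (y : ℝ) : ∑' m : ℤ, summand5 (y - π * m) ≤ 17 / 12 := by
  set n := toIcoDiv pi_pos 0 y
  have hr : y - π * n ∈ Set.Ico 0 π := by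
    simpa [← self_sub_toIcoDiv_zsmul, mul_comm] using toIcoMod_mem_Ico' pi_pos y
  calc ∑' m : ℤ, summand5 (y - π * m) = ∑' m : ℤ, summand5 (y - π * n - π * m) := by
        rw [← (Equiv.addRight n).tsum_eq]
        simp only [Equiv.coe_addRight, Int.cast_add, mul_add, sub_sub, add_comm]
    _ ≤ 17 / 12 := tsum_summand5_sub_pi_mul_le_of_mem_Ico hr

theorem stmt_5_general (a : ℝ) (x : ℝ) :
    2 * (∑' m : ℤ, summand5 (a * x - Real.pi * m)) ≤
      (4 / Real.pi ^ 2) * (Real.pi ^ 2 / 6 - 1) + 2 / 3 +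
        2 * (2 * (3 / 8) + 2 / Real.pi ^ 2) ∧
    (4 / Real.pi ^ 2) * (Real.pi ^ 2 / 6 - 1) + 2 / 3 +
        2 * (2 * (3 / 8) + 2 / Real.pi ^ 2) < 2.84 := by
  have hrhs : (4 / π ^ 2) * (π ^ 2 / 6 - 1) + 2 / 3 + 2 * (2 * (3 / 8) + 2 / π ^ 2) = 17 / 6 := by
    field_simp
    ring
  rw [hrhs]
  exact ⟨by linarith [tsum_summand5_sub_pi_mul_le (a * x)], by norm_num⟩

theorem stmt_5 (a : ℝ) (ha : 0 < a) (x : ℝ) :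
    2 * (∑' m : ℤ, summand5 (a * x - Real.pi * m)) ≤
      (4 / Real.pi ^ 2) * (Real.pi ^ 2 / 6 - 1) + 2 / 3 +
        2 * (2 * (3 / 8) + 2 / Real.pi ^ 2) ∧
    (4 / Real.pi ^ 2) * (Real.pi ^ 2 / 6 - 1) + 2 / 3 +
        2 * (2 * (3 / 8) + 2 / Real.pi ^ 2) < 2.84 :=
  stmt_5_general a x
end

section
/- For all real u ≠ 0, |(cos(u/2) - cos u)/u²| ≤ 3/8, and the function extends continuously to u = 0 with value 3/8. -/
/-! Sum-to-product turns `cos (u/2) - cos u` into `2 sin (3u/4) sin (u/4)`, so the quotient is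
`3/8 · sinc (3u/4) · sinc (u/4)`: it is bounded by `3/8` because `|sinc| ≤ 1`, and tends to `3/8`
because `sinc` is continuous with `sinc 0 = 1`. -/

open Real Filter

lemma Real.cos_half_sub_cos (u : ℝ) : cos (u / 2) - cos u = 2 * sin (3 * u / 4) * sin (u / 4) := by
  rw [cos_sub_cos, show (u / 2 - u) / 2 = -(u / 4) by ring, show (u / 2 + u) / 2 = 3 * u / 4 by ring,
    sin_neg]
  ring

lemma Real.cos_half_sub_cos_div_sq {u : ℝ} (hu : u ≠ 0) :
    (cos (u / 2) - cos u) / u ^ 2 = 3 / 8 * (sinc (3 * u / 4) * sinc (u / 4)) := by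
  rw [cos_half_sub_cos, sinc_of_ne_zero (by positivity), sinc_of_ne_zero (by positivity)]
  field_simp
  ring

theorem stmt_6 :
    (∀ u : ℝ, u ≠ 0 → |(Real.cos (u / 2) - Real.cos u) / u ^ 2| ≤ 3 / 8) ∧
      Filter.Tendsto (fun u : ℝ => (Real.cos (u / 2) - Real.cos u) / u ^ 2)
        (nhdsWithin 0 {0}ᶜ) (nhds (3 / 8)) := by
  constructor
  · intro u hu
    rw [cos_half_sub_cos_div_sq hu, abs_mul, abs_mul, abs_of_pos (by norm_num : (0 : ℝ) < 3 / 8)]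
    have := mul_le_one₀ (abs_sinc_le_one (3 * u / 4)) (abs_nonneg _) (abs_sinc_le_one (u / 4))
    linarith
  · have hcont : Continuous fun u : ℝ => 3 / 8 * (sinc (3 * u / 4) * sinc (u / 4)) := by
      fun_prop
    have hlim := (hcont.tendsto 0).mono_left (nhdsWithin_le_nhds (s := {0}ᶜ))
    simp only [mul_zero, zero_div, sinc_zero, mul_one] at hlim
    refine hlim.congr' ?_
    filter_upwards [self_mem_nhdsWithin] with u hu
    exact (cos_half_sub_cos_div_sq hu).symm
end

section
/- Suppose Φ : ℂ → ℂ is holomorphic on the strip |Im z| ≤ δ, Φ restricted to every horizontal line ℝ + iα (|α| ≤ δ) is integrable, and Φ(x + iα) → 0 as |x| → ∞ uniformly for |α| ≤ δ. Then for every α with |α| < δ, ∫_ℝ e^{ixu} Φ(x) dx = e^{-αu} ∫_ℝ e^{izu} Φ(z + iα) dz for all u ∈ ℝ. -/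
/-!
Cauchy's theorem on the rectangle with vertices `±T`, `±T + iα` equates the integrals of
`g z = e^{izu} Φ z` over `[-T, T]` and over `[-T, T] + iα` up to the two vertical sides. Since `Φ`
tends to `0` uniformly on the strip and `|e^{izu}| ≤ e^{|α u|}` there, the vertical sides vanish as
`T → ∞`. On the upper line `e^{iu(x + iα)} = e^{-αu} e^{iux}`, which produces the factor `e^{-αu}`.
-/

open MeasureTheory Complex Set Filter Topology
open scoped Interval

theorem tendsto_intervalIntegral_of_tendstoUniformlyOn_zero {ι E : Type*} [NormedAddCommGroup E]
    [NormedSpace ℝ E] {l : Filter ι} {F : ι → ℝ → E} {a b : ℝ}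
    (hF : TendstoUniformlyOn F 0 l (Ι a b)) :
    Tendsto (fun i => ∫ y in a..b, F i y) l (𝓝 0) := by
  rw [Metric.tendstoUniformlyOn_iff] at hF
  rw [Metric.tendsto_nhds]
  intro ε hε
  have hε' : 0 < ε / (|b - a| + 1) := by positivity
  filter_upwards [hF _ hε'] with i hi
  have hbound := intervalIntegral.norm_integral_le_of_norm_le_const
    fun y hy => (by simpa using (hi y hy).le : ‖F i y‖ ≤ ε / (|b - a| + 1))
  rw [dist_zero_right]
  calc ‖∫ y in a..b, F i y‖ ≤ ε / (|b - a| + 1) * |b - a| := hbound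
    _ < ε / (|b - a| + 1) * (|b - a| + 1) := by gcongr; linarith
    _ = ε := div_mul_cancel₀ ε (by positivity)

theorem TendstoUniformlyOn.mul_zero_of_norm_le {ι X R : Type*} [SeminormedRing R]
    {l : Filter ι} {s : Set X} {F G : ι → X → R} {C : ℝ}
    (hF : TendstoUniformlyOn F 0 l s) (hG : ∀ i, ∀ x ∈ s, ‖G i x‖ ≤ C) :
    TendstoUniformlyOn (fun i x => G i x * F i x) 0 l s := by
  rw [Metric.tendstoUniformlyOn_iff] at hF ⊢
  intro ε hε
  filter_upwards [hF (ε / (|C| + 1)) (by positivity)] with i hi x hx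
  have hFx : ‖F i x‖ < ε / (|C| + 1) := by simpa using hi x hx
  rw [Pi.zero_apply, dist_zero_left]
  calc ‖G i x * F i x‖ ≤ ‖G i x‖ * ‖F i x‖ := norm_mul_le _ _
    _ ≤ (|C| + 1) * ‖F i x‖ := by
        gcongr; exact (hG i x hx).trans ((le_abs_self C).trans (le_add_of_nonneg_right zero_le_one))
    _ < (|C| + 1) * (ε / (|C| + 1)) := by gcongr
    _ = ε := mul_div_cancel₀ ε (by positivity)

theorem integral_boundary_rect_horizontal_eq_zero {E : Type*} [NormedAddCommGroup E]
    [NormedSpace ℂ E] {f : ℂ → E} {α : ℝ}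
    (hf : DifferentiableOn ℂ f (im ⁻¹' [[0, α]])) (T : ℝ) :
    (∫ x in -T..T, f x) - (∫ x in -T..T, f (x + α * I))
      + I • (∫ y in (0 : ℝ)..α, f (T + y * I)) - I • (∫ y in (0 : ℝ)..α, f (-T + y * I)) = 0 := by
  have hrect : [[(-T : ℂ).re, (T + α * I : ℂ).re]] ×ℂ [[(-T : ℂ).im, (T + α * I : ℂ).im]] ⊆
      im ⁻¹' [[0, α]] := fun z hz => by simpa using hz.2
  simpa using integral_boundary_rect_eq_zero_of_differentiableOn f (-T) (T + α * I) (hf.mono hrect)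

theorem integral_eq_integral_add_mul_I_of_tendstoUniformlyOn {E : Type*} [NormedAddCommGroup E]
    [NormedSpace ℂ E] [CompleteSpace E] {f : ℂ → E} {α : ℝ}
    (hf : DifferentiableOn ℂ f (im ⁻¹' [[0, α]]))
    (hint₀ : Integrable fun x : ℝ => f x) (hintα : Integrable fun x : ℝ => f (x + α * I))
    (hdecay : TendstoUniformlyOn (fun x y : ℝ => f (x + y * I)) 0 (cocompact ℝ) [[0, α]]) :
    ∫ x : ℝ, f x = ∫ x : ℝ, f (x + α * I) := by
  have hvert := tendsto_intervalIntegral_of_tendstoUniformlyOn_zero (hdecay.mono uIoc_subset_uIcc)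
  have hright : Tendsto (fun T : ℝ => ∫ y in (0 : ℝ)..α, f (T + y * I)) atTop (𝓝 0) :=
    hvert.comp (tendsto_id.mono_left atTop_le_cocompact)
  have hleft : Tendsto (fun T : ℝ => ∫ y in (0 : ℝ)..α, f (-T + y * I)) atTop (𝓝 0) := by
    simpa [Function.comp_def] using
      hvert.comp (tendsto_neg_atTop_atBot.mono_right atBot_le_cocompact)
  have hlim := (((intervalIntegral_tendsto_integral hint₀ tendsto_neg_atTop_atBot tendsto_id).sub
    (intervalIntegral_tendsto_integral hintα tendsto_neg_atTop_atBot tendsto_id)).add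
    (hright.const_smul I)).sub (hleft.const_smul I)
  simp_rw [id, integral_boundary_rect_horizontal_eq_zero hf, smul_zero, add_zero, sub_zero] at hlim
  exact sub_eq_zero.1 (tendsto_nhds_unique tendsto_const_nhds hlim).symm

theorem cexp_I_mul_add_mul_I_mul (x β u : ℂ) :
    cexp (I * (x + β * I) * u) = cexp (-β * u) * cexp (I * x * u) := by
  rw [← Complex.exp_add]
  congr 1
  linear_combination β * u * I_mul_I

theorem norm_cexp_I_mul_add_mul_I_mul (x y u : ℝ) :
    ‖cexp (I * (x + y * I) * u)‖ = Real.exp (-(y * u)) := by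
  rw [norm_exp]
  simp

theorem MeasureTheory.Integrable.cexp_I_mul_mul {h : ℝ → ℂ} (hh : Integrable h) (u : ℝ) :
    Integrable fun x : ℝ => cexp (I * x * u) * h x :=
  hh.bdd_mul (c := 1) (by fun_prop) (.of_forall fun x => by
    rw [norm_exp]; simp)

theorem stmt_15_general (δ : ℝ) (Φ : ℂ → ℂ)
    (hdiff : DifferentiableOn ℂ Φ {z : ℂ | |z.im| ≤ δ})
    (hint : ∀ α : ℝ, |α| ≤ δ →
      MeasureTheory.Integrable (fun x : ℝ => Φ (x + α * Complex.I)))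
    (hdecay : ∀ ε : ℝ, 0 < ε → ∃ R : ℝ, ∀ x α : ℝ, |α| ≤ δ → R ≤ |x| →
      ‖Φ (x + α * Complex.I)‖ ≤ ε) :
    ∀ α : ℝ, |α| < δ → ∀ u : ℝ,
      (∫ x : ℝ, Complex.exp (Complex.I * x * u) * Φ x) =
        Complex.exp (-(α : ℂ) * u) *
          ∫ x : ℝ, Complex.exp (Complex.I * x * u) * Φ (x + α * Complex.I) := by
  intro α hα u
  have habs : ∀ y ∈ [[0, α]], |y| ≤ |α| := fun y hy => by
    simpa using abs_sub_left_of_mem_uIcc hy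
  have hstrip : ∀ y ∈ [[0, α]], |y| ≤ δ := fun y hy => (habs y hy).trans hα.le
  have hdiff_g : DifferentiableOn ℂ (fun z => cexp (I * z * u) * Φ z) (im ⁻¹' [[0, α]]) :=
    (by fun_prop : Differentiable ℂ fun z => cexp (I * z * u)).differentiableOn.mul
      (hdiff.mono fun z hz => hstrip z.im hz)
  have hint_g₀ : Integrable fun x : ℝ => cexp (I * x * u) * Φ x := by
    simpa using (hint 0 (by simpa using (abs_nonneg α).trans hα.le)).cexp_I_mul_mul u
  have hint_gα : Integrable fun x : ℝ => cexp (I * (x + α * I) * u) * Φ (x + α * I) := by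
    simp_rw [cexp_I_mul_add_mul_I_mul, mul_assoc (cexp _)]
    exact ((hint α hα.le).cexp_I_mul_mul u).const_mul _
  have hdecay_Φ : TendstoUniformlyOn (fun x y : ℝ => Φ (x + y * I)) 0 (cocompact ℝ) [[0, α]] := by
    rw [Metric.tendstoUniformlyOn_iff]
    intro ε hε
    obtain ⟨R, hR⟩ := hdecay (ε / 2) (half_pos hε)
    filter_upwards [tendsto_norm_cocompact_atTop.eventually_ge_atTop R] with x hx y hy
    simpa using (hR x y (hstrip y hy) hx).trans_lt (half_lt_self hε)
  have hdecay_g : TendstoUniformlyOn (fun x y : ℝ => cexp (I * (x + y * I) * u) * Φ (x + y * I)) 0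
      (cocompact ℝ) [[0, α]] :=
    hdecay_Φ.mul_zero_of_norm_le (C := Real.exp (|α| * |u|)) fun x y hy => by
      rw [norm_cexp_I_mul_add_mul_I_mul, Real.exp_le_exp]
      calc -(y * u) ≤ |y| * |u| := abs_mul y u ▸ neg_le_abs _
        _ ≤ |α| * |u| := mul_le_mul_of_nonneg_right (habs y hy) (abs_nonneg u)
  rw [integral_eq_integral_add_mul_I_of_tendstoUniformlyOn hdiff_g hint_g₀ hint_gα hdecay_g]
  simp_rw [cexp_I_mul_add_mul_I_mul, mul_assoc (cexp _)]
  exact integral_const_mul _ _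

theorem stmt_15 (δ : ℝ) (hδ : 0 < δ) (Φ : ℂ → ℂ)
    (hdiff : DifferentiableOn ℂ Φ {z : ℂ | |z.im| ≤ δ})
    (hint : ∀ α : ℝ, |α| ≤ δ →
      MeasureTheory.Integrable (fun x : ℝ => Φ (x + α * Complex.I)))
    (hdecay : ∀ ε : ℝ, 0 < ε → ∃ R : ℝ, ∀ x α : ℝ, |α| ≤ δ → R ≤ |x| →
      ‖Φ (x + α * Complex.I)‖ ≤ ε) :
    ∀ α : ℝ, |α| < δ → ∀ u : ℝ,
      (∫ x : ℝ, Complex.exp (Complex.I * x * u) * Φ x) =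
        Complex.exp (-(α : ℂ) * u) *
          ∫ x : ℝ, Complex.exp (Complex.I * x * u) * Φ (x + α * Complex.I) :=
  stmt_15_general δ Φ hdiff hint hdecay
end
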